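/- Let ⟨H_n : n ∈ ω⟩ be a sequence with H_n ⊆ 2^n for each n and ∑_{n=1}^∞ |H_n| · 2^{-n} ≤ 1/4, let H = {x ∈ 2^ω : x↾n ∈ H_n for infinitely many n}, and define f_H(n) = min{m : ∑_{j=m}^∞ |H_j| · 2^{-j} < 4^{-n}}. If f ∈ ω^ω is strictly increasing and f_H ≤* f, then G_f is not a subset of H, where G_f = {x ∈ 2^ω : x(f(n)) = 0 for all n}. -/

import Mathlib

/-!
Let `ν` be the product measure on `2^ω` whose coordinates in `range f` are `0` and whose other
coordinates are independent fair coins; it is concentrated on `G_f`. If `j ≤ f (n + 1)`, at most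
`n + 1` of the first `j` coordinates are forced, so a fixed string of length `j` is an initial
segment with `ν`-probability at most `2^{n+1-j}`. Hence the set of `x` with `x↾j ∈ H_j` for some
`j ∈ [f n, f (n + 1))` has measure at most `2^{n+1} ∑_{j ≥ f n} |H_j| 2^{-j}`, which is below
`2^{n+1} 4^{-n}` once `f_H n ≤ f n`. Summing over `n ≥ N ≥ 3` gives less than `1`, so some
`x ∈ G_f` has `x↾j ∉ H_j` for every `j ≥ f N`, that is, `x ∉ H`.
-/

open Set Filter MeasureTheory ENNReal

namespace ENNReal

lemma inv_two_pow_le_of_le {a b c : ℕ} (h : a ≤ b + c) :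
    (2⁻¹ : ℝ≥0∞) ^ b ≤ 2 ^ c * 2⁻¹ ^ a := by
  calc (2⁻¹ : ℝ≥0∞) ^ b = 2 ^ c * 2⁻¹ ^ (b + c) := by
        rw [pow_add, mul_left_comm, ← mul_pow, ENNReal.mul_inv_cancel two_ne_zero ofNat_ne_top,
          one_pow, mul_one]
    _ ≤ 2 ^ c * 2⁻¹ ^ a := by gcongr 2 ^ c * ?_; exact pow_le_pow_right_of_le_one' (by norm_num) h

lemma one_div_four_pow_mul_two_pow_succ (n : ℕ) :
    (1 / 4 : ℝ≥0∞) ^ n * 2 ^ (n + 1) = 2 * 2⁻¹ ^ n := by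
  have hquarter : (1 / 4 : ℝ≥0∞) * 2 = 2⁻¹ := by
    rw [one_div, show (4 : ℝ≥0∞) = 2 * 2 by norm_num, ENNReal.mul_inv (by simp) (by simp),
      mul_assoc, ENNReal.inv_mul_cancel two_ne_zero ofNat_ne_top, mul_one]
  rw [pow_succ, ← mul_assoc, ← mul_pow, hquarter, mul_comm]

lemma tsum_two_mul_inv_two_pow_add_lt_one {N : ℕ} (hN : 3 ≤ N) :
    ∑' k, 2 * (2⁻¹ : ℝ≥0∞) ^ (N + k) < 1 := by
  calc ∑' k, 2 * (2⁻¹ : ℝ≥0∞) ^ (N + k) = 4 * 2⁻¹ ^ N := by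
        simp only [pow_add, ENNReal.tsum_mul_left, ENNReal.tsum_geometric,
          ENNReal.one_sub_inv_two, inv_inv]
        ring
    _ ≤ 4 * 2⁻¹ ^ 3 := by gcongr 4 * ?_; exact pow_le_pow_right_of_le_one' (by norm_num) hN
    _ = (2 * 2⁻¹) * (2 * 2⁻¹) * 2⁻¹ := by ring
    _ < 1 := by
        rw [ENNReal.mul_inv_cancel two_ne_zero ofNat_ne_top, one_mul, one_mul]
        exact ENNReal.inv_lt_one.mpr one_lt_two

lemma sum_Ico_le_tsum_nat_add (a : ℕ → ℝ≥0∞) (m l : ℕ) :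
    ∑ j ∈ Finset.Ico m l, a j ≤ ∑' j, a (m + j) := by
  rw [Finset.sum_Ico_eq_sum_range]
  exact ENNReal.sum_le_tsum _

lemma antitone_tsum_nat_add (a : ℕ → ℝ≥0∞) : Antitone fun m => ∑' j, a (m + j) := by
  intro m n hmn
  have hinj : Function.Injective fun j => n - m + j := add_right_injective _
  simpa [← add_assoc, Nat.add_sub_cancel' hmn] using
    ENNReal.tsum_comp_le_tsum_of_injective hinj fun j => a (m + j)

lemma exists_tsum_nat_add_lt {a : ℕ → ℝ≥0∞} (ha : ∑' j, a (j + 1) ≠ ∞) {ε : ℝ≥0∞}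
    (hε : 0 < ε) : ∃ m, ∑' j, a (m + j) < ε := by
  obtain ⟨i, hi⟩ := ((ENNReal.tendsto_sum_nat_add _ ha).eventually_lt_const hε).exists
  refine ⟨i + 1, lt_of_eq_of_lt (tsum_congr fun j => ?_) hi⟩
  rw [add_comm j, add_right_comm]

end ENNReal

namespace StrictMono

variable {f : ℕ → ℕ}

lemma exists_mem_Ico (hf : StrictMono f) {N j : ℕ} (hj : f N ≤ j) :
    ∃ n, N ≤ n ∧ f n ≤ j ∧ j < f (n + 1) := by
  by_contra! h
  have hle : ∀ k, f (N + k) ≤ j := by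
    intro k
    induction k with
    | zero => exact hj
    | succ k ih => exact h (N + k) (by omega) ih
  have := hle (j + 1)
  have : N + (j + 1) ≤ f (N + (j + 1)) := hf.le_apply
  omega

open scoped Classical in
lemma card_filter_mem_range_le (hf : StrictMono f) {j n : ℕ} (hj : j ≤ f (n + 1)) :
    ((Finset.range j).filter (· ∈ range f)).card ≤ n + 1 := by
  calc ((Finset.range j).filter (· ∈ range f)).card
      ≤ ((Finset.range (n + 1)).image f).card := by
        refine Finset.card_le_card fun i hi => ?_
        obtain ⟨hij, k, rfl⟩ := by simpa using hi
        exact Finset.mem_image_of_mem f (Finset.mem_range.mpr (hf.lt_iff_lt.mp (by omega)))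
    _ ≤ n + 1 := Finset.card_image_le.trans (by simp)

open scoped Classical in
lemma inv_two_pow_card_filter_not_mem_range_le (hf : StrictMono f) {j n : ℕ}
    (hj : j ≤ f (n + 1)) :
    (2⁻¹ : ℝ≥0∞) ^ ((Finset.range j).filter (· ∉ range f)).card ≤ 2 ^ (n + 1) * 2⁻¹ ^ j := by
  refine ENNReal.inv_two_pow_le_of_le ?_
  have := Finset.card_filter_add_card_filter_not (s := Finset.range j) (· ∈ range f)
  have := hf.card_filter_mem_range_le hj
  simp only [Finset.card_range] at *
  omega

end StrictMono

section ForcedZero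

open scoped Classical

variable (A : Set ℕ)

noncomputable def forcedZeroCoin (i : ℕ) : Measure Bool :=
  if i ∈ A then Measure.dirac false else (PMF.uniformOfFintype Bool).toMeasure

instance (i : ℕ) : IsProbabilityMeasure (forcedZeroCoin A i) := by
  unfold forcedZeroCoin; split_ifs <;> infer_instance

lemma forcedZeroCoin_singleton_le (i : ℕ) (b : Bool) :
    forcedZeroCoin A i {b} ≤ if i ∈ A then 1 else 2⁻¹ := by
  unfold forcedZeroCoin
  split_ifs
  · exact prob_le_one
  · simp [PMF.uniformOfFintype_apply]

lemma forcedZeroCoin_true_of_mem {i : ℕ} (hi : i ∈ A) : forcedZeroCoin A i {true} = 0 := by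
  simp [forcedZeroCoin, hi]

noncomputable def forcedZeroMeasure : Measure (ℕ → Bool) :=
  Measure.infinitePi (forcedZeroCoin A)

instance : IsProbabilityMeasure (forcedZeroMeasure A) := by
  unfold forcedZeroMeasure; infer_instance

lemma forcedZeroMeasure_compl_setOf_forall_mem_eq_false :
    forcedZeroMeasure A {x | ∀ i ∈ A, x i = false}ᶜ = 0 := by
  have hcompl : {x : ℕ → Bool | ∀ i ∈ A, x i = false}ᶜ = ⋃ i ∈ A, Set.pi {i} fun _ => {true} := by
    ext x; simp
  rw [hcompl, measure_biUnion_null_iff A.to_countable]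
  intro i hi
  rw [forcedZeroMeasure, ← Finset.coe_singleton, Measure.infinitePi_pi _ (by simp)]
  simp [forcedZeroCoin_true_of_mem A hi]

lemma forcedZeroMeasure_prefix_eq_le {j : ℕ} (h : Fin j → Bool) :
    forcedZeroMeasure A {x | (fun i : Fin j => x i) = h} ≤
      2⁻¹ ^ ((Finset.range j).filter (· ∉ A)).card := by
  set t : ℕ → Set Bool := fun i => {if hi : i < j then h ⟨i, hi⟩ else false}
  have hsub : {x : ℕ → Bool | (fun i : Fin j => x i) = h} ⊆ Set.pi (Finset.range j) t := by
    rintro x rfl i hi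
    simp_all [t]
  calc forcedZeroMeasure A {x | (fun i : Fin j => x i) = h}
      ≤ ∏ i ∈ Finset.range j, forcedZeroCoin A i (t i) := by
        rw [forcedZeroMeasure, ← Measure.infinitePi_pi _ (by simp)]
        exact measure_mono hsub
    _ ≤ ∏ i ∈ Finset.range j, if i ∈ A then 1 else 2⁻¹ :=
        Finset.prod_le_prod' fun i _ => forcedZeroCoin_singleton_le A i _
    _ = _ := by rw [Finset.prod_ite]; simp

end ForcedZero

def hitsBetween (H : (n : ℕ) → Finset (Fin n → Bool)) (m l : ℕ) : Set (ℕ → Bool) :=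
  {x | ∃ j ∈ Finset.Ico m l, (fun i : Fin j => x i) ∈ H j}

section Blocks

variable {f : ℕ → ℕ} (H : (n : ℕ) → Finset (Fin n → Bool))

lemma mem_iUnion_hitsBetween_of_infinite (hf : StrictMono f) (N : ℕ) {x : ℕ → Bool}
    (hx : {n : ℕ | (fun i : Fin n => x i) ∈ H n}.Infinite) :
    x ∈ ⋃ k, hitsBetween H (f (N + k)) (f (N + k + 1)) := by
  obtain ⟨j, hj, hjN⟩ := hx.exists_gt (f N)
  obtain ⟨n, hNn, hnj, hjn⟩ := hf.exists_mem_Ico hjN.le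
  refine mem_iUnion.mpr ⟨n - N, ?_⟩
  rw [Nat.add_sub_cancel' hNn]
  exact ⟨j, Finset.mem_Ico.mpr ⟨hnj, hjn⟩, hj⟩

lemma forcedZeroMeasure_prefix_mem_le (hf : StrictMono f) {j n : ℕ} (hj : j ≤ f (n + 1))
    (S : Finset (Fin j → Bool)) :
    forcedZeroMeasure (range f) {x | (fun i : Fin j => x i) ∈ S} ≤
      S.card * (2 ^ (n + 1) * 2⁻¹ ^ j) := by
  have hunion : {x : ℕ → Bool | (fun i : Fin j => x i) ∈ S} =
      ⋃ h ∈ S, {x | (fun i : Fin j => x i) = h} := by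
    ext x; simp
  rw [hunion, ← nsmul_eq_mul]
  refine (measure_biUnion_finset_le S _).trans ?_
  exact Finset.sum_le_card_nsmul _ _ _ fun h _ =>
    (forcedZeroMeasure_prefix_eq_le _ h).trans (hf.inv_two_pow_card_filter_not_mem_range_le hj)

lemma forcedZeroMeasure_hitsBetween_le (hf : StrictMono f) (n : ℕ) :
    forcedZeroMeasure (range f) (hitsBetween H (f n) (f (n + 1))) ≤
      2 ^ (n + 1) * ∑' j, ((H (f n + j)).card : ℝ≥0∞) / 2 ^ (f n + j) := by
  have hunion : hitsBetween H (f n) (f (n + 1)) =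
      ⋃ j ∈ Finset.Ico (f n) (f (n + 1)), {x | (fun i : Fin j => x i) ∈ H j} := by
    ext x; simp [hitsBetween]
  rw [hunion]
  calc _ ≤ ∑ j ∈ Finset.Ico (f n) (f (n + 1)),
        forcedZeroMeasure (range f) {x | (fun i : Fin j => x i) ∈ H j} :=
        measure_biUnion_finset_le _ _
    _ ≤ ∑ j ∈ Finset.Ico (f n) (f (n + 1)), ((H j).card : ℝ≥0∞) * (2 ^ (n + 1) * 2⁻¹ ^ j) :=
        Finset.sum_le_sum fun j hj =>
          forcedZeroMeasure_prefix_mem_le hf (Finset.mem_Ico.mp hj).2.le _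
    _ = 2 ^ (n + 1) * ∑ j ∈ Finset.Ico (f n) (f (n + 1)), ((H j).card : ℝ≥0∞) / 2 ^ j := by
        simp only [Finset.mul_sum, div_eq_mul_inv, ENNReal.inv_pow]
        exact Finset.sum_congr rfl fun j _ => by ring
    _ ≤ _ := by gcongr; exact ENNReal.sum_Ico_le_tsum_nat_add _ _ _

lemma forcedZeroMeasure_iUnion_hitsBetween_lt_one (hf : StrictMono f) {N : ℕ} (hN : 3 ≤ N)
    (htail : ∀ n, N ≤ n →
      ∑' j, ((H (f n + j)).card : ℝ≥0∞) / 2 ^ (f n + j) ≤ (1 / 4) ^ n) :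
    forcedZeroMeasure (range f) (⋃ k, hitsBetween H (f (N + k)) (f (N + k + 1))) < 1 := by
  calc _ ≤ ∑' k, forcedZeroMeasure (range f) (hitsBetween H (f (N + k)) (f (N + k + 1))) :=
        measure_iUnion_le _
    _ ≤ ∑' k, 2 * 2⁻¹ ^ (N + k) := ENNReal.tsum_le_tsum fun k => by
        rw [← ENNReal.one_div_four_pow_mul_two_pow_succ, mul_comm]
        exact (forcedZeroMeasure_hitsBetween_le H hf _).trans (by gcongr; exact htail _ (by omega))
    _ < 1 := ENNReal.tsum_two_mul_inv_two_pow_add_lt_one hN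

end Blocks

theorem Gf_not_subset_H (H : (n : ℕ) → Finset (Fin n → Bool))
    (hsum : ∑' n : ℕ, ((H (n+1)).card : ENNReal) / 2 ^ (n+1) ≤ 1/4)
    (fH : ℕ → ℕ)
    (hfH : ∀ n, fH n =
      sInf {m : ℕ | ∑' j : ℕ, ((H (m+j)).card : ENNReal) / 2 ^ (m+j) < (1/4 : ENNReal) ^ n})
    (f : ℕ → ℕ) (hf : StrictMono f) (hdom : ∀ᶠ n in atTop, fH n ≤ f n) :
    ¬ ({x : ℕ → Bool | ∀ n, x (f n) = false} ⊆
       {x : ℕ → Bool | {n : ℕ | (fun i : Fin n => x i) ∈ H n}.Infinite}) := by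
  intro hsub
  set a : ℕ → ℝ≥0∞ := fun j => (H j).card / 2 ^ j
  have hfin : ∑' j, a (j + 1) ≠ ∞ := ne_top_of_le_ne_top (by norm_num) hsum
  have htail (n : ℕ) : ∑' j, a (fH n + j) < (1 / 4) ^ n := by
    rw [hfH n]
    exact Nat.sInf_mem (ENNReal.exists_tsum_nat_add_lt hfin (ENNReal.pow_pos (by norm_num) n))
  obtain ⟨N₀, hN₀⟩ := eventually_atTop.mp hdom
  set N := max N₀ 3
  set Bad := ⋃ k, hitsBetween H (f (N + k)) (f (N + k + 1))
  have hBad : forcedZeroMeasure (range f) Bad < 1 :=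
    forcedZeroMeasure_iUnion_hitsBetween_lt_one H hf (le_max_right _ _) fun n hn =>
      (ENNReal.antitone_tsum_nat_add a (hN₀ n (le_of_max_le_left hn))).trans (htail n).le
  have hcover : univ ⊆ {x : ℕ → Bool | ∀ i ∈ range f, x i = false}ᶜ ∪ Bad := fun x _ =>
    (em' (∀ i ∈ range f, x i = false)).imp id fun hx =>
      mem_iUnion_hitsBetween_of_infinite H hf N (hsub fun n => hx _ (mem_range_self n))
  refine (measure_univ (μ := forcedZeroMeasure (range f))).not_lt ?_
  calc _ ≤ forcedZeroMeasure (range f) {x | ∀ i ∈ range f, x i = false}ᶜ +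
          forcedZeroMeasure (range f) Bad := (measure_mono hcover).trans (measure_union_le _ _)
    _ < 1 := by rwa [forcedZeroMeasure_compl_setOf_forall_mem_eq_false, zero_add]
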